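/- Let 2 ≤ k ≤ n−2. For j ∈ [n] = {1,…,n}, define the linear functional L_j on ℝ^n by L_j(y) = Σ_{t=1}^{n−1} t · y_{j+t}, where indices are taken modulo n in {1,…,n}. For a k-element subset J of [n], let e_J ∈ ℝ^n be its indicator vector, and define h_J ∈ ℝ^{C(n,k)} by (h_J)_I = (1/n) · min{ L_1(e_I − e_J), …, L_n(e_I − e_J) } for each k-element subset I. Let K(k,n) be the subspace of ℝ^{C(n,k)} consisting of vectors s with Σ_{I : I ∋ j} s_I = 0 for every j ∈ [n]. Then for every frozen subset J, i.e. every cyclic interval J = {i, i+1, …, i+k−1} (indices mod n), and every s ∈ K(k,n), the dot product h_J · s equals 0. -/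

import Mathlib

/-!
Put `y = e_I - e_J`. As `|I| = |J|`, `∑ y = 0`, and the cyclic shift gives
`L_{j+1}(y) = L_j(y) + n y_j`, hence `L_{i+m}(y) = L_i(y) + n (y_i + ⋯ + y_{i+m-1})`.
When `J = {i, …, i+k-1}`, `y ≤ 0` on `J` and `y ≥ 0` off `J`, so these partial sums are
smallest at `m = k`: the minimum of the `L_j(e_I - e_J)` is `Φ(e_I) - Φ(e_J)` for the single
linear functional `Φ = L_i + n (ev_i + ⋯ + ev_{i+k-1})`. So `h_J` is an affine function of `e_I`,
and `K(k,n)` is orthogonal to linear functions of `e_I` (as `∑_I s_I e_I = 0`) and to constants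
(as `k ∑_I s_I = ∑_j ∑_{I ∋ j} s_I = 0`).
-/

open Finset
open scoped Fin.NatCast

section Kinematic

variable {α : Type*} [Fintype α] [DecidableEq α] {k : ℕ}

def IsKinematic (s : {I : Finset α // I.card = k} → ℝ) : Prop :=
  ∀ j : α, ∑ I, (if j ∈ I.1 then s I else 0) = 0

namespace IsKinematic

variable {s : {I : Finset α // I.card = k} → ℝ}

theorem sum_eq_zero (hs : IsKinematic s) (hk : k ≠ 0) : ∑ I, s I = 0 := by
  have hcount : ∑ j : α, ∑ I, (if j ∈ I.1 then s I else 0) = k * ∑ I, s I := by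
    rw [sum_comm, mul_sum]
    refine sum_congr rfl fun I _ => ?_
    rw [sum_ite_mem, univ_inter, sum_const, I.2, nsmul_eq_mul]
  have := hcount.symm.trans (Finset.sum_eq_zero fun j _ => hs j)
  exact (mul_eq_zero.mp this).resolve_left (Nat.cast_ne_zero.mpr hk)

theorem sum_map_indicator_mul_eq_zero (hs : IsKinematic s) (Φ : (α → ℝ) →ₗ[ℝ] ℝ) :
    ∑ I, Φ (fun t => if t ∈ I.1 then 1 else 0) * s I = 0 := by
  have hvec : ∑ I, s I • (fun t : α => if t ∈ I.1 then (1 : ℝ) else 0) = 0 := by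
    ext j
    simpa [Finset.sum_apply, smul_eq_mul, mul_ite] using hs j
  simp_rw [mul_comm _ (s _), ← smul_eq_mul, ← map_smul, ← map_sum, hvec, map_zero]

end IsKinematic

end Kinematic

theorem sum_range_le_sum_range_of_nonpos_of_nonneg {M : Type*} [AddCommMonoid M] [PartialOrder M]
    [IsOrderedAddMonoid M] {f : ℕ → M} {k m : ℕ} (hneg : ∀ s < k, f s ≤ 0)
    (hpos : ∀ s, k ≤ s → s < m → 0 ≤ f s) :
    ∑ s ∈ range k, f s ≤ ∑ s ∈ range m, f s := by
  rcases le_total m k with hmk | hkm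
  · rw [← sum_range_add_sum_Ico _ hmk]
    exact add_le_of_nonpos_right (sum_nonpos fun s hs => hneg s (mem_Ico.mp hs).2)
  · rw [← sum_range_add_sum_Ico _ hkm]
    exact le_add_of_nonneg_right (sum_nonneg fun s hs => hpos s (mem_Ico.mp hs).1 (mem_Ico.mp hs).2)

section CyclicMoment

variable {n : ℕ}

section CommRing

variable {R : Type*} [CommRing R]

/-- The functional `L_j`; the summand `t = 0` has weight `0`. -/
def cyclicMoment (j : Fin n) : (Fin n → R) →ₗ[R] R :=
  ∑ t : Fin n, (t.val : R) • LinearMap.proj (j + t)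

@[simp]
theorem cyclicMoment_apply (j : Fin n) (y : Fin n → R) :
    cyclicMoment j y = ∑ t : Fin n, (t.val : R) * y (j + t) := by
  simp [cyclicMoment]

theorem cyclicMoment_add_one [NeZero n] (j : Fin n) (y : Fin n → R) :
    cyclicMoment (j + 1) y = cyclicMoment j y + n * y j - ∑ t, y t := by
  obtain ⟨m, rfl⟩ := Nat.exists_eq_succ_of_ne_zero (NeZero.ne n)
  have hrest : ∑ t : Fin m, y (j + t.succ) = ∑ t, y t - y j := by
    rw [eq_sub_iff_add_eq, ← Equiv.sum_comp (Equiv.addLeft j), Fin.sum_univ_succ]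
    simp [add_comm]
  simp only [cyclicMoment_apply]
  rw [Fin.sum_univ_castSucc, Fin.sum_univ_succ]
  have hstep (t : Fin m) : j + 1 + t.castSucc = j + t.succ := by
    rw [add_assoc, add_comm 1, Fin.coeSucc_eq_succ]
  have hlast : j + 1 + Fin.last m = j := by rw [add_assoc, add_comm 1, Fin.last_add_one, add_zero]
  simp only [hstep, hlast, Fin.val_castSucc, Fin.val_succ, Fin.val_last, Fin.val_zero,
    Nat.cast_zero, zero_mul, zero_add, add_mul, one_mul, sum_add_distrib, hrest, Nat.cast_succ]
  ring

theorem cyclicMoment_add_natCast [NeZero n] {y : Fin n → R} (hy : ∑ t, y t = 0) (j : Fin n)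
    (m : ℕ) :
    cyclicMoment (j + (m : Fin n)) y = cyclicMoment j y + n * ∑ s ∈ range m, y (j + s) := by
  induction m with
  | zero => simp
  | succ m ih =>
    rw [Nat.cast_succ, ← add_assoc, cyclicMoment_add_one, ih, hy, sum_range_succ]
    ring

end CommRing

theorem iInf_cyclicMoment_eq [NeZero n] {y : Fin n → ℝ} (hy : ∑ t, y t = 0) (i : Fin n) {k : ℕ}
    (hneg : ∀ s < k, y (i + s) ≤ 0) (hpos : ∀ s, k ≤ s → s < n → 0 ≤ y (i + s)) :
    ⨅ j, cyclicMoment j y = cyclicMoment i y + n * ∑ s ∈ range k, y (i + s) := by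
  rw [← cyclicMoment_add_natCast hy]
  refine le_antisymm (ciInf_le (Set.finite_range _).bddBelow _) (le_ciInf fun j => ?_)
  have hj : j = i + ((j - i).val : Fin n) := by rw [Fin.cast_val_eq_self, add_sub_cancel]
  rw [hj, cyclicMoment_add_natCast hy, cyclicMoment_add_natCast hy]
  have hpartial := sum_range_le_sum_range_of_nonpos_of_nonneg hneg
    (fun s hks hs => hpos s hks (hs.trans (j - i).isLt))
  gcongr

def cyclicInterval (i : Fin n) (k : ℕ) : Finset (Fin n) :=
  univ.image fun t : Fin k => (⟨(i.val + t.val) % n, Nat.mod_lt _ i.pos⟩ : Fin n)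

theorem cyclicInterval_eq_image {k : ℕ} (hkn : k ≤ n) (i : Fin n) :
    cyclicInterval i k = univ.image fun t : Fin k => i + Fin.castLE hkn t :=
  rfl

theorem card_cyclicInterval {k : ℕ} (hkn : k ≤ n) (i : Fin n) :
    (cyclicInterval i k).card = k := by
  rw [cyclicInterval_eq_image hkn, card_image_of_injective, card_univ, Fintype.card_fin]
  exact (add_right_injective i).comp (Fin.castLE_injective hkn)

theorem add_natCast_mem_cyclicInterval_iff {k : ℕ} [NeZero n] (hkn : k ≤ n) (i : Fin n)
    {s : ℕ} (hs : s < n) : i + (s : Fin n) ∈ cyclicInterval i k ↔ s < k := by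
  simp only [cyclicInterval_eq_image hkn, mem_image, mem_univ, true_and, add_right_inj, Fin.ext_iff,
    Fin.val_castLE, Fin.val_natCast, Nat.mod_eq_of_lt hs]
  exact ⟨fun ⟨t, ht⟩ => ht ▸ t.isLt, fun hsk => ⟨⟨s, hsk⟩, rfl⟩⟩

def intervalFunctional [NeZero n] (i : Fin n) (k : ℕ) : (Fin n → ℝ) →ₗ[ℝ] ℝ :=
  cyclicMoment i + (n : ℝ) • ∑ s ∈ range k, LinearMap.proj (i + (s : Fin n))

theorem iInf_cyclicMoment_indicator_sub_indicator [NeZero n] {k : ℕ} (hkn : k ≤ n) (i : Fin n)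
    {I : Finset (Fin n)} (hI : I.card = k) :
    ⨅ j, cyclicMoment j
        (fun t => (if t ∈ I then (1 : ℝ) else 0) - if t ∈ cyclicInterval i k then 1 else 0) =
      intervalFunctional i k (fun t => if t ∈ I then 1 else 0) -
        intervalFunctional i k (fun t => if t ∈ cyclicInterval i k then 1 else 0) := by
  have hmem : ∀ s < n, i + (s : Fin n) ∈ cyclicInterval i k ↔ s < k := fun _ ↦
    add_natCast_mem_cyclicInterval_iff hkn i
  have hsum :
      ∑ t, ((if t ∈ I then (1 : ℝ) else 0) - if t ∈ cyclicInterval i k then 1 else 0) = 0 := by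
    simp [sum_sub_distrib, hI, card_cyclicInterval hkn]
  rw [iInf_cyclicMoment_eq hsum i (k := k), ← map_sub]
  · simp [intervalFunctional, LinearMap.sum_apply]
  · intro s hsk
    simp only [(hmem s (by omega)).2 hsk, ↓reduceIte]
    split_ifs <;> norm_num
  · intro s hks hsn
    simp only [(hmem s hsn).not.2 (by omega), ↓reduceIte]
    split_ifs <;> norm_num

end CyclicMoment

/-- for frozen (cyclic-interval) J, the height vector h_J pairs to zero
with every point of the kinematic space K(k,n). -/
theorem stmt_17 (n k : ℕ) (hk : 2 ≤ k) (hkn : k + 2 ≤ n)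
    (J : Finset (Fin n))
    (hfroz : ∃ i : Fin n, J = Finset.image
      (fun t : Fin k => (⟨(i.val + t.val) % n, Nat.mod_lt _ i.pos⟩ : Fin n)) Finset.univ)
    (s : {I : Finset (Fin n) // I.card = k} → ℝ)
    (hs : ∀ j : Fin n, ∑ I : {I : Finset (Fin n) // I.card = k},
      (if j ∈ I.1 then s I else 0) = 0) :
    let L : Fin n → (Fin n → ℝ) → ℝ := fun j y => ∑ t : Fin n, (t.val : ℝ) * y (j + t)
    let ind : Finset (Fin n) → Fin n → ℝ := fun J t => if t ∈ J then 1 else 0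
    let h : Finset (Fin n) → {I : Finset (Fin n) // I.card = k} → ℝ := fun J I =>
      (1 / n) * ⨅ j : Fin n, L j fun t => ind I.1 t - ind J t
    ∑ I : {I : Finset (Fin n) // I.card = k}, h J I * s I = 0 := by
  intro L ind h
  have : NeZero n := ⟨by omega⟩
  obtain ⟨i, hJ⟩ := hfroz
  change J = cyclicInterval i k at hJ
  set Φ := intervalFunctional i k
  have hL (j : Fin n) (y : Fin n → ℝ) : L j y = cyclicMoment j y :=
    (cyclicMoment_apply j y).symm
  have hheight (I : {I : Finset (Fin n) // I.card = k}) :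
      h J I = 1 / n * (Φ (ind I.1) - Φ (ind J)) := by
    simp only [h, hL, hJ]
    rw [iInf_cyclicMoment_indicator_sub_indicator (by omega) i I.2]
  have hlin : ∑ I, Φ (ind I.1) * s I = 0 := IsKinematic.sum_map_indicator_mul_eq_zero hs Φ
  have htotal : ∑ I, s I = 0 := IsKinematic.sum_eq_zero hs (by omega)
  calc ∑ I, h J I * s I = 1 / n * (∑ I, Φ (ind I.1) * s I - Φ (ind J) * ∑ I, s I) := by
        simp only [hheight, mul_assoc, sub_mul, ← mul_sum, sum_sub_distrib]
    _ = 0 := by rw [hlin, htotal]; ring
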